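/- (Second Analyticity Theorem) Let ζ ∈ (0,1), let r ∈ ℕ with r ≥ 1, and let (a_n)_{n∈ℕ} be a summable sequence of nonnegative real numbers. Then for every z in the open set U = {z ∈ ℂ : |z| > 1} \ closure(𝒵) the series F_r(z) = Σ_{n=0}^∞ a_n · (τ_z^{(n)}(1))^r converges, and the function z ↦ F_r(z) is analytic on U. -/

import Mathlib

/-- `h ζ w = ((ζ + w)/(1 + ζ w))^2`. -/
noncomputable def hmap (ζ : ℝ) (w : ℂ) : ℂ := (((ζ : ℂ) + w) / (1 + (ζ : ℂ) * w)) ^ 2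

/-- The `n`-th iterate `τ_z^{(n)}(1)` of `u ↦ h(z·u)` starting from `1`. -/
noncomputable def tauIter (ζ : ℝ) (z : ℂ) : ℕ → ℂ
  | 0 => 1
  | n + 1 => hmap ζ (z * tauIter ζ z n)

/-- The pair `(P_n, Q_n)` of polynomials defined by `P_0 = Q_0 = 1`,
`P_{n+1} = (ζ Q_n + X P_n)²`, `Q_{n+1} = (Q_n + ζ X P_n)²`. -/
noncomputable def PQ (ζ : ℝ) : ℕ → Polynomial ℂ × Polynomial ℂ
  | 0 => (1, 1)
  | n + 1 =>
    (((ζ : ℂ) • (PQ ζ n).2 + Polynomial.X * (PQ ζ n).1) ^ 2,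
     ((PQ ζ n).2 + (ζ : ℂ) • (Polynomial.X * (PQ ζ n).1)) ^ 2)

noncomputable def Ppoly (ζ : ℝ) (n : ℕ) : Polynomial ℂ := (PQ ζ n).1

noncomputable def Qpoly (ζ : ℝ) (n : ℕ) : Polynomial ℂ := (PQ ζ n).2

/-- `R_n = ζ·X·P_n + Q_n`. -/
noncomputable def Rpoly (ζ : ℝ) (n : ℕ) : Polynomial ℂ :=
  (ζ : ℂ) • (Polynomial.X * Ppoly ζ n) + Qpoly ζ n

/-- `𝒵_n`, the set of complex roots of `R_n`. -/
def Zset (ζ : ℝ) (n : ℕ) : Set ℂ := {z : ℂ | (Rpoly ζ n).eval z = 0}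

/-- `𝒵 = ⋃ₙ 𝒵_n`. -/
def ZsetAll (ζ : ℝ) : Set ℂ := ⋃ n : ℕ, Zset ζ n

open Polynomial ComplexConjugate Metric

/-!
Off `𝒵` one has `τ_z^{(n)}(1) = P_n(z) / Q_n(z)`. The polynomial `P_n` is monic and `Q_n` is its
reversal, `Q_n(z) = z^{deg P_n} P_n(1/z)`. Since `Q_n` has no zero in the closed unit disc, every
root `μ` of `P_n` lies in it; as `∏ |μ| = |P_n(0)| ≥ ζ²`, also `|μ| ≥ ζ²`; and the reflected point
`1/μ̄` is a zero of `Q_n = R_{n-1}²`, hence lies in `𝒵`. So `|τ_z^{(n)}(1)| = ∏ |z - μ| / |1 - μ̄ z|`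
is the modulus of a finite Blaschke product, and if `z` is at distance `≥ d` from `𝒵` each factor
is at most `|μ| ^ (-(1 + 2/(ζ² d)))`. The product of these bounds is at most
`(ζ²) ^ (-(1 + 2/(ζ² d)))`, independently of `n`. The series is therefore dominated by `∑ aₙ Mʳ`
uniformly near each point off `closure 𝒵`, and a uniform limit of holomorphic functions is
holomorphic.
-/

theorem norm_smul_add_le_norm_add_smul {E : Type*} [NormedAddCommGroup E]
    [InnerProductSpace ℝ E] {t : ℝ} (ht : |t| ≤ 1) {x y : E} (hxy : ‖y‖ ≤ ‖x‖) :
    ‖t • x + y‖ ≤ ‖x + t • y‖ := by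
  have key : ‖x + t • y‖ ^ 2 - ‖t • x + y‖ ^ 2 = (1 - t ^ 2) * (‖x‖ ^ 2 - ‖y‖ ^ 2) := by
    simp only [norm_add_sq_real, norm_smul, inner_smul_left, inner_smul_right, Real.norm_eq_abs,
      mul_pow, sq_abs, conj_trivial]
    ring
  have ht2 : t ^ 2 ≤ 1 := by nlinarith [abs_nonneg t, sq_abs t]
  have hsq : ‖y‖ ^ 2 ≤ ‖x‖ ^ 2 := pow_le_pow_left₀ (norm_nonneg y) hxy 2
  exact pow_le_pow_iff_left₀ (norm_nonneg _) (norm_nonneg _) two_ne_zero |>.mp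
    (by nlinarith [mul_nonneg (sub_nonneg.2 ht2) (sub_nonneg.2 hsq)])

theorem add_smul_ne_zero_of_norm_le {E : Type*} [NormedAddCommGroup E] [NormedSpace ℝ E]
    {t : ℝ} (ht : |t| < 1) {x y : E} (hx : x ≠ 0) (hxy : ‖y‖ ≤ ‖x‖) : x + t • y ≠ 0 := by
  intro h
  have : ‖x‖ = |t| * ‖y‖ := by
    rw [eq_neg_of_add_eq_zero_left h, norm_neg, norm_smul, Real.norm_eq_abs]
  nlinarith [abs_nonneg t, norm_pos_iff.2 hx]

theorem one_add_mul_one_sub_le_rpow_neg {m t : ℝ} (hm : 0 < m) (ht : 0 ≤ t) :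
    1 + t * (1 - m) ≤ m ^ (-t) := by
  rw [Real.rpow_def_of_pos hm]
  nlinarith [Real.log_le_sub_one_of_pos hm, Real.add_one_le_exp (Real.log m * -t)]

theorem Multiset.prod_map_le_of_mem {α : Type*} [DecidableEq α] {s : Multiset α} {f : α → ℝ}
    (h0 : ∀ x ∈ s, 0 ≤ f x) (h1 : ∀ x ∈ s, f x ≤ 1) {a : α} (ha : a ∈ s) :
    (s.map f).prod ≤ f a := by
  rw [← Multiset.prod_map_erase ha]
  refine mul_le_of_le_one_right (h0 a ha) ?_
  calc ((s.erase a).map f).prod ≤ ((s.erase a).map fun _ => (1 : ℝ)).prod :=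
        Multiset.prod_map_le_prod_map₀ _ _ (fun x hx => h0 x (Multiset.mem_of_mem_erase hx))
          fun x hx => h1 x (Multiset.mem_of_mem_erase hx)
    _ = 1 := by simp

theorem Multiset.norm_prod {α : Type*} [SeminormedCommRing α] [NormMulClass α] [NormOneClass α]
    (s : Multiset α) : ‖s.prod‖ = (s.map (‖·‖)).prod :=
  map_multiset_prod (normHom : α →*₀ ℝ) s

theorem norm_sub_le_rpow_mul_norm_one_sub_conj_mul {μ z : ℂ} {c d : ℝ} (hc : 0 < c)
    (hcμ : c ≤ ‖μ‖) (hμ1 : ‖μ‖ ≤ 1) (hd : 0 < d) (hdz : d ≤ dist z (conj μ)⁻¹) :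
    ‖z - μ‖ ≤ ‖μ‖ ^ (-(1 + 2 / (c * d))) * ‖1 - conj μ * z‖ := by
  set m := ‖μ‖
  set t := 2 / (c * d)
  have hm : 0 < m := hc.trans_le hcμ
  have hν : conj μ * (conj μ)⁻¹ = 1 := mul_inv_cancel₀ (by simpa [← norm_pos_iff] using hm)
  set A := ‖z - (conj μ)⁻¹‖
  have hA : d ≤ A := hdz.trans_eq (Complex.dist_eq _ _)
  have hden : ‖1 - conj μ * z‖ = m * A := by
    rw [show 1 - conj μ * z = -conj μ * (z - (conj μ)⁻¹) by linear_combination -hν, norm_mul,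
      norm_neg, Complex.norm_conj]
  have hνμ : ‖(conj μ)⁻¹ - μ‖ = (1 - m ^ 2) / m := by
    rw [show (conj μ)⁻¹ - μ = (conj μ)⁻¹ * (1 - μ * conj μ) by linear_combination μ * hν,
      Complex.mul_conj', norm_mul, norm_inv, Complex.norm_conj, ← Complex.ofReal_pow,
      ← Complex.ofReal_one, ← Complex.ofReal_sub, Complex.norm_real,
      Real.norm_of_nonneg (by nlinarith), inv_mul_eq_div]
  have htAm : 2 ≤ t * A * m := by
    rw [div_mul_eq_mul_div, div_mul_eq_mul_div, le_div_iff₀ (by positivity)]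
    nlinarith [mul_le_mul hA hcμ hc.le (hd.le.trans hA)]
  have hgap : (1 - m ^ 2) / m ≤ t * (1 - m) * A := by
    rw [div_le_iff₀ hm]
    nlinarith [mul_le_mul_of_nonneg_left htAm (sub_nonneg.2 hμ1)]
  calc ‖z - μ‖ ≤ A + ‖(conj μ)⁻¹ - μ‖ := norm_sub_le_norm_sub_add_norm_sub z _ μ
    _ ≤ (1 + t * (1 - m)) * A := by rw [hνμ]; linarith
    _ ≤ m ^ (-t) * A := by
        gcongr; exact one_add_mul_one_sub_le_rpow_neg hm (by positivity)
    _ = m ^ (-(1 + t)) * ‖1 - conj μ * z‖ := by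
        rw [hden, neg_add, Real.rpow_add hm, Real.rpow_neg_one]; field_simp

theorem Multiset.prod_map_norm_sub_le_rpow_mul_prod_map_norm_one_sub_conj_mul
    {s : Multiset ℂ} {z : ℂ} {c d : ℝ} (hc : 0 < c) (hd : 0 < d)
    (hs : ∀ μ ∈ s, c ≤ ‖μ‖ ∧ ‖μ‖ ≤ 1 ∧ d ≤ dist z (conj μ)⁻¹) :
    (s.map fun μ => ‖z - μ‖).prod ≤
      (s.map (‖·‖)).prod ^ (-(1 + 2 / (c * d))) * (s.map fun μ => ‖1 - conj μ * z‖).prod := by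
  rw [← Real.multiset_prod_map_rpow _ _ (fun _ _ => norm_nonneg _), ← Multiset.prod_map_mul]
  refine Multiset.prod_map_le_prod_map₀ _ _ (fun _ _ => norm_nonneg _) fun μ hμ => ?_
  obtain ⟨hcμ, hμ1, hdz⟩ := hs μ hμ
  exact norm_sub_le_rpow_mul_norm_one_sub_conj_mul hc hcμ hμ1 hd hdz

theorem Metric.exists_pos_forall_le_dist_of_notMem_closure {α : Type*} [PseudoMetricSpace α]
    {s : Set α} {x : α} (hx : x ∉ closure s) :
    ∃ δ > 0, ∀ y ∈ ball x δ, ∀ w ∈ s, δ ≤ dist y w := by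
  obtain ⟨ε, hε, hs⟩ : ∃ ε > 0, ∀ w ∈ s, ε ≤ dist x w := by
    simpa [Metric.mem_closure_iff] using hx
  refine ⟨ε / 2, half_pos hε, fun y hy w hw => ?_⟩
  linarith [hs w hw, dist_triangle x y w, mem_ball'.1 hy]

section Polynomials

variable (ζ : ℝ)

def degP : ℕ → ℕ
  | 0 => 0
  | n + 1 => 2 * (degP n + 1)

@[simp] theorem Ppoly_zero : Ppoly ζ 0 = 1 := rfl

@[simp] theorem Qpoly_zero : Qpoly ζ 0 = 1 := rfl

theorem Ppoly_succ (n : ℕ) :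
    Ppoly ζ (n + 1) = (C (ζ : ℂ) * Qpoly ζ n + X * Ppoly ζ n) ^ 2 := by
  rw [← smul_eq_C_mul]; rfl

theorem Qpoly_succ (n : ℕ) :
    Qpoly ζ (n + 1) = (Qpoly ζ n + C (ζ : ℂ) * (X * Ppoly ζ n)) ^ 2 := by
  rw [← smul_eq_C_mul]; rfl

theorem Qpoly_succ_eq_sq_Rpoly (n : ℕ) : Qpoly ζ (n + 1) = Rpoly ζ n ^ 2 := by
  rw [Qpoly_succ, Rpoly, smul_eq_C_mul, add_comm]

@[simp] theorem eval_Ppoly_succ (n : ℕ) (z : ℂ) :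
    (Ppoly ζ (n + 1)).eval z = (ζ * (Qpoly ζ n).eval z + z * (Ppoly ζ n).eval z) ^ 2 := by
  simp [Ppoly_succ]

@[simp] theorem eval_Qpoly_succ (n : ℕ) (z : ℂ) :
    (Qpoly ζ (n + 1)).eval z = ((Qpoly ζ n).eval z + ζ * (z * (Ppoly ζ n).eval z)) ^ 2 := by
  simp [Qpoly_succ]

@[simp] theorem eval_Rpoly (n : ℕ) (z : ℂ) :
    (Rpoly ζ n).eval z = ζ * (z * (Ppoly ζ n).eval z) + (Qpoly ζ n).eval z := by
  simp [Rpoly]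

theorem monic_Ppoly_and_natDegree (n : ℕ) :
    (Ppoly ζ n).Monic ∧ (Ppoly ζ n).natDegree = degP n ∧ (Qpoly ζ n).natDegree ≤ degP n := by
  induction n with
  | zero => simp [degP]
  | succ n ih =>
    obtain ⟨hmon, hdeg, hQ⟩ := ih
    have hXP : (X * Ppoly ζ n).natDegree = degP n + 1 := by
      rw [natDegree_X_mul hmon.ne_zero, hdeg]
    have hlt : (C (ζ : ℂ) * Qpoly ζ n).degree < (X * Ppoly ζ n).degree :=
      degree_lt_degree <| (natDegree_C_mul_le _ _).trans_lt <| by omega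
    have hmonS := (monic_X.mul hmon).add_of_right hlt
    refine ⟨?_, ?_, ?_⟩
    · rw [Ppoly_succ]; exact hmonS.pow 2
    · rw [Ppoly_succ, hmonS.natDegree_pow, natDegree_add_eq_right_of_degree_lt hlt, hXP, degP]
    · rw [Qpoly_succ, degP]
      refine natDegree_pow_le_of_le 2 <| natDegree_add_le_of_degree_le (by omega) ?_
      exact (natDegree_C_mul_le _ _).trans hXP.le

theorem monic_Ppoly (n : ℕ) : (Ppoly ζ n).Monic := (monic_Ppoly_and_natDegree ζ n).1

theorem natDegree_Ppoly (n : ℕ) : (Ppoly ζ n).natDegree = degP n :=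
  (monic_Ppoly_and_natDegree ζ n).2.1

theorem eval_zero_Qpoly (n : ℕ) : (Qpoly ζ n).eval 0 = 1 := by
  induction n with
  | zero => simp
  | succ n ih => simp [ih]

theorem eval_conj_Qpoly (n : ℕ) (z : ℂ) :
    (Qpoly ζ n).eval (conj z) = conj ((Qpoly ζ n).eval z) := by
  suffices (Ppoly ζ n).eval (conj z) = conj ((Ppoly ζ n).eval z) ∧
      (Qpoly ζ n).eval (conj z) = conj ((Qpoly ζ n).eval z) from this.2
  induction n with
  | zero => simp
  | succ n ih => simp [ih.1, ih.2]

theorem eval_Qpoly_eq_pow_mul_eval_inv_Ppoly (n : ℕ) {z : ℂ} (hz : z ≠ 0) :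
    (Qpoly ζ n).eval z = z ^ degP n * (Ppoly ζ n).eval z⁻¹ := by
  induction n generalizing z with
  | zero => simp [degP]
  | succ n ih =>
    have h : z ^ degP n * (Qpoly ζ n).eval z⁻¹ = (Ppoly ζ n).eval z := by
      rw [ih (inv_ne_zero hz), inv_inv, ← mul_assoc, ← mul_pow, mul_inv_cancel₀ hz, one_pow,
        one_mul]
    simp only [eval_Ppoly_succ, eval_Qpoly_succ, ih hz, ← h, degP]
    field_simp
    ring

theorem mem_ZsetAll_of_eval_Qpoly_eq_zero {n : ℕ} {z : ℂ} (h : (Qpoly ζ n).eval z = 0) :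
    z ∈ ZsetAll ζ := by
  cases n with
  | zero => simp at h
  | succ n =>
    rw [Qpoly_succ_eq_sq_Rpoly, eval_pow, pow_eq_zero_iff two_ne_zero] at h
    exact Set.mem_iUnion.2 ⟨n, h⟩

theorem tauIter_eq_div {z : ℂ} (hz : z ∉ ZsetAll ζ) (n : ℕ) :
    tauIter ζ z n = (Ppoly ζ n).eval z / (Qpoly ζ n).eval z := by
  induction n with
  | zero => simp [tauIter]
  | succ n ih =>
    have hQ : (Qpoly ζ n).eval z ≠ 0 := fun h => hz (mem_ZsetAll_of_eval_Qpoly_eq_zero ζ h)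
    have hR : (Rpoly ζ n).eval z ≠ 0 := fun h => hz (Set.mem_iUnion.2 ⟨n, h⟩)
    rw [eval_Rpoly] at hR
    rw [tauIter, ih, hmap, eval_Ppoly_succ, eval_Qpoly_succ, ← div_pow]
    congr 1
    field_simp

theorem differentiableOn_tauIter (n : ℕ) :
    DifferentiableOn ℂ (fun z => tauIter ζ z n) (ZsetAll ζ)ᶜ := by
  refine DifferentiableOn.congr ?_ fun z hz => tauIter_eq_div ζ hz n
  exact (Ppoly ζ n).differentiableOn.div (Qpoly ζ n).differentiableOn
    fun z hz h => hz (mem_ZsetAll_of_eval_Qpoly_eq_zero ζ h)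

theorem eval_Ppoly_eq_prod_roots (n : ℕ) (z : ℂ) :
    (Ppoly ζ n).eval z = ((Ppoly ζ n).roots.map (z - ·)).prod :=
  (IsAlgClosed.splits _).eval_eq_prod_roots_of_monic (monic_Ppoly ζ n) z

theorem eval_Qpoly_eq_prod_roots (n : ℕ) (z : ℂ) :
    (Qpoly ζ n).eval z = ((Ppoly ζ n).roots.map (1 - · * z)).prod := by
  rcases eq_or_ne z 0 with rfl | hz
  · simp [eval_zero_Qpoly]
  rw [eval_Qpoly_eq_pow_mul_eval_inv_Ppoly ζ n hz, eval_Ppoly_eq_prod_roots, ← natDegree_Ppoly,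
    ← IsAlgClosed.card_roots_eq_natDegree, ← Multiset.prod_replicate, ← Multiset.map_const',
    ← Multiset.prod_map_mul]
  congr 1
  refine Multiset.map_congr rfl fun μ _ => ?_
  field_simp

theorem norm_eval_Qpoly_eq_prod_roots (n : ℕ) (z : ℂ) :
    ‖(Qpoly ζ n).eval z‖ = ((Ppoly ζ n).roots.map fun μ => ‖1 - conj μ * z‖).prod := by
  rw [← Complex.norm_conj, ← eval_conj_Qpoly, eval_Qpoly_eq_prod_roots, Multiset.norm_prod,
    Multiset.map_map]
  refine congrArg _ (Multiset.map_congr rfl fun μ _ => ?_)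
  rw [Function.comp_apply, ← Complex.norm_conj]
  simp

theorem prod_map_norm_roots_Ppoly (n : ℕ) :
    ((Ppoly ζ n).roots.map (‖·‖)).prod = ‖(Ppoly ζ n).eval 0‖ := by
  rw [eval_Ppoly_eq_prod_roots, Multiset.norm_prod, Multiset.map_map]
  simp

theorem eval_inv_Qpoly_eq_zero {n : ℕ} {μ : ℂ} (hμ : μ ∈ (Ppoly ζ n).roots) (hμ0 : μ ≠ 0) :
    (Qpoly ζ n).eval μ⁻¹ = 0 := by
  rw [eval_Qpoly_eq_prod_roots]
  exact Multiset.prod_eq_zero (Multiset.mem_map.2 ⟨μ, hμ, by simp [hμ0]⟩)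

variable {ζ}

theorem sq_le_norm_eval_zero_Ppoly (hζ : |ζ| ≤ 1) (n : ℕ) :
    ζ ^ 2 ≤ ‖(Ppoly ζ n).eval 0‖ := by
  cases n with
  | zero => simpa using hζ
  | succ n => simp [eval_zero_Qpoly]

theorem norm_mul_eval_Ppoly_le_and_eval_Qpoly_ne_zero (hζ : |ζ| < 1) (n : ℕ) {z : ℂ}
    (hz : ‖z‖ ≤ 1) :
    ‖z * (Ppoly ζ n).eval z‖ ≤ ‖(Qpoly ζ n).eval z‖ ∧ (Qpoly ζ n).eval z ≠ 0 := by
  induction n with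
  | zero => simpa using hz
  | succ n ih =>
    obtain ⟨hle, hne⟩ := ih
    simp only [eval_Ppoly_succ, eval_Qpoly_succ, ← Complex.real_smul, norm_mul, norm_pow]
    refine ⟨?_, pow_ne_zero 2 (add_smul_ne_zero_of_norm_le hζ hne hle)⟩
    calc ‖z‖ * ‖ζ • (Qpoly ζ n).eval z + z * (Ppoly ζ n).eval z‖ ^ 2
        ≤ 1 * ‖(Qpoly ζ n).eval z + ζ • (z * (Ppoly ζ n).eval z)‖ ^ 2 := by
          gcongr
          exact norm_smul_add_le_norm_add_smul hζ.le hle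
      _ = _ := one_mul _

theorem norm_le_one_of_mem_roots_Ppoly (hζ : |ζ| < 1) {n : ℕ} {μ : ℂ}
    (hμ : μ ∈ (Ppoly ζ n).roots) : ‖μ‖ ≤ 1 := by
  by_contra! h
  have hμ0 : μ ≠ 0 := norm_pos_iff.1 (one_pos.trans h)
  have hinv : ‖μ⁻¹‖ ≤ 1 := by rw [norm_inv]; exact inv_le_one_of_one_le₀ h.le
  exact (norm_mul_eval_Ppoly_le_and_eval_Qpoly_ne_zero hζ n hinv).2
    (eval_inv_Qpoly_eq_zero ζ hμ hμ0)

theorem sq_le_norm_of_mem_roots_Ppoly (hζ : |ζ| < 1) {n : ℕ} {μ : ℂ}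
    (hμ : μ ∈ (Ppoly ζ n).roots) : ζ ^ 2 ≤ ‖μ‖ := by
  classical
  calc ζ ^ 2 ≤ ‖(Ppoly ζ n).eval 0‖ := sq_le_norm_eval_zero_Ppoly hζ.le n
    _ = ((Ppoly ζ n).roots.map (‖·‖)).prod := (prod_map_norm_roots_Ppoly ζ n).symm
    _ ≤ ‖μ‖ := Multiset.prod_map_le_of_mem (fun _ _ => norm_nonneg _)
        (fun _ hν => norm_le_one_of_mem_roots_Ppoly hζ hν) hμ

theorem inv_conj_mem_ZsetAll_of_mem_roots_Ppoly (hζ0 : ζ ≠ 0) (hζ : |ζ| < 1) {n : ℕ}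
    {μ : ℂ} (hμ : μ ∈ (Ppoly ζ n).roots) : (conj μ)⁻¹ ∈ ZsetAll ζ := by
  have hμ0 : μ ≠ 0 := norm_pos_iff.1 <| (pow_pos (abs_pos.2 hζ0) 2).trans_le <|
    (sq_abs ζ).symm ▸ sq_le_norm_of_mem_roots_Ppoly hζ hμ
  refine mem_ZsetAll_of_eval_Qpoly_eq_zero ζ (n := n) ?_
  rw [← map_inv₀, eval_conj_Qpoly, eval_inv_Qpoly_eq_zero ζ hμ hμ0, map_zero]

theorem norm_tauIter_le (hζ0 : ζ ≠ 0) (hζ : |ζ| < 1) {z : ℂ} {d : ℝ} (hd : 0 < d)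
    (hz : ∀ w ∈ ZsetAll ζ, d ≤ dist z w) (n : ℕ) :
    ‖tauIter ζ z n‖ ≤ (ζ ^ 2) ^ (-(1 + 2 / (ζ ^ 2 * d))) := by
  have hzZ : z ∉ ZsetAll ζ := fun h => (hd.trans_le (hz z h)).ne' (dist_self z)
  have hζ2 : 0 < ζ ^ 2 := by positivity
  have hQ : 0 < ‖(Qpoly ζ n).eval z‖ :=
    norm_pos_iff.2 fun h => hzZ (mem_ZsetAll_of_eval_Qpoly_eq_zero ζ h)
  rw [tauIter_eq_div ζ hzZ, norm_div, div_le_iff₀ hQ]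
  calc ‖(Ppoly ζ n).eval z‖
      = ((Ppoly ζ n).roots.map fun μ => ‖z - μ‖).prod := by
        rw [eval_Ppoly_eq_prod_roots, Multiset.norm_prod, Multiset.map_map]; rfl
    _ ≤ ((Ppoly ζ n).roots.map (‖·‖)).prod ^ (-(1 + 2 / (ζ ^ 2 * d))) *
          ‖(Qpoly ζ n).eval z‖ := by
        rw [norm_eval_Qpoly_eq_prod_roots]
        refine Multiset.prod_map_norm_sub_le_rpow_mul_prod_map_norm_one_sub_conj_mul hζ2 hd
          fun μ hμ => ⟨sq_le_norm_of_mem_roots_Ppoly hζ hμ,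
            norm_le_one_of_mem_roots_Ppoly hζ hμ,
            hz _ (inv_conj_mem_ZsetAll_of_mem_roots_Ppoly hζ0 hζ hμ)⟩
    _ ≤ (ζ ^ 2) ^ (-(1 + 2 / (ζ ^ 2 * d))) * ‖(Qpoly ζ n).eval z‖ := by
        refine mul_le_mul_of_nonneg_right (Real.rpow_le_rpow_of_nonpos hζ2 ?_ ?_) (norm_nonneg _)
        · exact (prod_map_norm_roots_Ppoly ζ n).symm ▸ sq_le_norm_eval_zero_Ppoly hζ.le n
        · have := div_pos two_pos (mul_pos hζ2 hd)
          linarith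

theorem exists_ball_norm_tauIter_le (hζ0 : ζ ≠ 0) (hζ : |ζ| < 1) {z₀ : ℂ}
    (hz₀ : z₀ ∉ closure (ZsetAll ζ)) :
    ∃ δ > 0, ∃ M, ball z₀ δ ⊆ (ZsetAll ζ)ᶜ ∧ ∀ z ∈ ball z₀ δ, ∀ n, ‖tauIter ζ z n‖ ≤ M := by
  obtain ⟨δ, hδ, hdist⟩ := exists_pos_forall_le_dist_of_notMem_closure hz₀
  refine ⟨δ, hδ, _, fun z hz hzZ => ?_, fun z hz => norm_tauIter_le hζ0 hζ hδ (hdist z hz)⟩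
  exact hδ.ne' (le_antisymm (dist_self z ▸ hdist z hz z hzZ) hδ.le)

end Polynomials

theorem stmt9_general (ζ : ℝ) (hζ0 : 0 < ζ) (hζ1 : ζ < 1) (r : ℕ)
    (a : ℕ → ℝ) (ha : Summable a) (ha' : ∀ n, 0 ≤ a n) :
    (∀ z ∈ {z : ℂ | 1 < ‖z‖} \ closure (ZsetAll ζ),
        Summable (fun n : ℕ => (a n : ℂ) * (tauIter ζ z n) ^ r)) ∧
    AnalyticOnNhd ℂ (fun z => ∑' n : ℕ, (a n : ℂ) * (tauIter ζ z n) ^ r)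
      ({z : ℂ | 1 < ‖z‖} \ closure (ZsetAll ζ)) := by
  have hloc : ∀ z₀ ∉ closure (ZsetAll ζ), ∃ δ > 0, ∃ M,
      (∀ n, DifferentiableOn ℂ (fun z => (a n : ℂ) * tauIter ζ z n ^ r) (ball z₀ δ)) ∧
      ∀ n, ∀ z ∈ ball z₀ δ, ‖(a n : ℂ) * tauIter ζ z n ^ r‖ ≤ a n * M ^ r := by
    intro z₀ hz₀
    obtain ⟨δ, hδ, M, hball, hM⟩ :=
      exists_ball_norm_tauIter_le hζ0.ne' (abs_lt.2 ⟨by linarith, hζ1⟩) hz₀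
    refine ⟨δ, hδ, M, fun n => (((differentiableOn_tauIter ζ n).mono hball).pow r).const_mul _,
      fun n z hz => ?_⟩
    rw [norm_mul, norm_pow, Complex.norm_real, Real.norm_of_nonneg (ha' n)]
    exact mul_le_mul_of_nonneg_left (pow_le_pow_left₀ (norm_nonneg _) (hM z hz n) r) (ha' n)
  constructor
  · rintro z₀ ⟨-, hz₀⟩
    obtain ⟨δ, hδ, M, -, hbound⟩ := hloc z₀ hz₀
    exact (ha.mul_right _).of_norm_bounded fun n => hbound n z₀ (mem_ball_self hδ)
  · rintro z₀ ⟨-, hz₀⟩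
    obtain ⟨δ, hδ, M, hdiff, hbound⟩ := hloc z₀ hz₀
    exact (Complex.differentiableOn_tsum_of_summable_norm (ha.mul_right _) hdiff isOpen_ball
      hbound).analyticAt (ball_mem_nhds z₀ hδ)

/-- (Second Analyticity Theorem.) For `0 < ζ < 1`, `r ≥ 1` and a summable sequence of
nonnegative reals `a`, the series `F_r(z) = Σ aₙ (τ_z^{(n)}(1))^r` converges at every
point of `U = {|z| > 1} \ closure 𝒵` and defines an analytic function there. -/
theorem stmt9 (ζ : ℝ) (hζ0 : 0 < ζ) (hζ1 : ζ < 1) (r : ℕ) (hr : 1 ≤ r)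
    (a : ℕ → ℝ) (ha : Summable a) (ha' : ∀ n, 0 ≤ a n) :
    (∀ z ∈ {z : ℂ | 1 < ‖z‖} \ closure (ZsetAll ζ),
        Summable (fun n : ℕ => (a n : ℂ) * (tauIter ζ z n) ^ r)) ∧
    AnalyticOnNhd ℂ (fun z => ∑' n : ℕ, (a n : ℂ) * (tauIter ζ z n) ^ r)
      ({z : ℂ | 1 < ‖z‖} \ closure (ZsetAll ζ)) :=
  stmt9_general ζ hζ0 hζ1 r a ha ha'
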